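/- For the first-price auction with truthful bidding on a common finite type space: for every bidder i, every pair θ_i < θ_i' in Θ, and every θ_{-i} with φ^{FPA}(θ_i,θ_{-i}) = φ^{FPA}(θ_i',θ_{-i}), there exists θ_{-i}' such that {θ_i,θ_i'} × {θ_{-i},θ_{-i}'} is an indistinguishable corners condition violation for bidder i (with bidder i losing at (θ_i,θ_{-i}) and (θ_i,θ_{-i}'), and φ^{FPA}(θ_i,θ_{-i}') ≠ φ^{FPA}(θ_i',θ_{-i}')). -/
import Mathlib


namespace PrivacyPaper

open Classical in
/-- The lowest-indexed bidder with the maximum value. -/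
noncomputable def lowWinner {n : ℕ} (hn : 0 < n) (θ : Fin n → ℝ) : Fin n :=
  (Finset.univ.filter fun i => ∀ j, θ j ≤ θ i).min' (by
    haveI : Nonempty (Fin n) := ⟨⟨0, hn⟩⟩
    obtain ⟨i, hi⟩ := Finite.exists_max θ
    exact ⟨i, Finset.mem_filter.mpr ⟨Finset.mem_univ i, hi⟩⟩)

/-- The first-price auction choice rule with truthful bidding and lowest-index
tie-breaking: the winner gets the good and pays her value, losers get `(false, 0)`. -/
noncomputable def FPA {n : ℕ} (hn : 0 < n) (θ : Fin n → ℝ) : Fin n → Bool × ℝ :=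
  fun j => if j = lowWinner hn θ then (true, θ j) else (false, 0)

lemma erase_univ_nonempty {n : ℕ} (hn : 2 ≤ n) (i : Fin n) :
    ((Finset.univ : Finset (Fin n)).erase i).Nonempty := by
  rw [← Finset.card_pos, Finset.card_erase_of_mem (Finset.mem_univ _), Finset.card_univ,
    Fintype.card_fin]
  omega

/-- The highest value among bidders other than `i`. -/
noncomputable def maxOther {n : ℕ} (hn : 2 ≤ n) (i : Fin n) (θ : Fin n → ℝ) : ℝ :=
  ((Finset.univ : Finset (Fin n)).erase i).sup' (erase_univ_nonempty hn i) θ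

/-- The second-price auction choice rule with lowest-index tie-breaking: the winner gets
the good and pays the highest value among the other bidders, losers get `(false, 0)`. -/
noncomputable def SPA {n : ℕ} (hn : 2 ≤ n) (θ : Fin n → ℝ) : Fin n → Bool × ℝ :=
  fun j =>
    if j = lowWinner (by omega) θ then
      (true, maxOther hn (lowWinner (by omega : 0 < n) θ) θ)
    else (false, 0)

lemma lowWinner_isMax {n : ℕ} (hn : 0 < n) (θ : Fin n → ℝ) (j : Fin n) :
    θ j ≤ θ (lowWinner hn θ) := by
  have h : lowWinner hn θ ∈ Finset.univ.filter fun i => ∀ j, θ j ≤ θ i :=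
    Finset.min'_mem _ _
  exact (Finset.mem_filter.mp h).2 j

lemma lowWinner_le {n : ℕ} (hn : 0 < n) (θ : Fin n → ℝ) (w : Fin n)
    (hw : ∀ j, θ j ≤ θ w) : lowWinner hn θ ≤ w :=
  Finset.min'_le _ _ (Finset.mem_filter.mpr ⟨Finset.mem_univ w, hw⟩)

lemma lowWinner_eq_of_unique {n : ℕ} (hn : 0 < n) (θ : Fin n → ℝ) (w : Fin n)
    (hw : ∀ k, k ≠ w → θ k < θ w) : lowWinner hn θ = w := by
  by_contra h
  have h1 := hw _ h
  have h2 := lowWinner_isMax hn θ w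
  linarith

lemma FPA_loser {n : ℕ} (hn : 0 < n) (θ : Fin n → ℝ) (j : Fin n)
    (h : j ≠ lowWinner hn θ) : FPA hn θ j = (false, 0) := if_neg h

lemma FPA_winner {n : ℕ} (hn : 0 < n) (θ : Fin n → ℝ) (j : Fin n)
    (h : j = lowWinner hn θ) : FPA hn θ j = (true, θ j) := if_pos h

/-- For the first-price auction with truthful bidding on a common finite type space:
whenever `a < a'` are not distinguished by the outcome in column `t`, there is a column
`t'` completing an indistinguishable-corners violation for bidder `i` (bidder `i` loses at
`(a, t)` and `(a, t')`, while the outcome at `(a, t')` and `(a', t')` differ). -/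
theorem fpa_violation_at_every_pooled_pair {n : ℕ} (hn : 2 ≤ n)
    (Θ : Finset ℝ) (hpos : ∀ x ∈ Θ, 0 ≤ x)
    (i : Fin n) (a a' : ℝ) (ha : a ∈ Θ) (ha' : a' ∈ Θ) (hlt : a < a')
    (t : Fin n → ℝ) (ht : ∀ j, t j ∈ Θ)
    (heq : FPA (by omega) (Function.update t i a)
         = FPA (by omega) (Function.update t i a')) :
    ∃ t' : Fin n → ℝ, (∀ j, t' j ∈ Θ) ∧
      FPA (by omega) (Function.update t i a) i = (false, 0) ∧
      FPA (by omega) (Function.update t' i a) i = (false, 0) ∧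
      FPA (by omega) (Function.update t' i a) ≠ FPA (by omega) (Function.update t' i a') := by
  have hn0 : 0 < n := by omega
  have hane : a ≠ a' := ne_of_lt hlt
  -- First: bidder i loses at (a, t)
  have key : FPA hn0 (Function.update t i a) i = (false, 0) := by
    rcases eq_or_ne i (lowWinner hn0 (Function.update t i a)) with hw | hw
    · exfalso
      have h1 : FPA hn0 (Function.update t i a) i = (true, a) := by
        rw [FPA_winner hn0 _ i hw, Function.update_self]
      have h2 : FPA hn0 (Function.update t i a) i
          = FPA hn0 (Function.update t i a') i := congrFun heq i
      rw [h1] at h2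
      rcases eq_or_ne i (lowWinner hn0 (Function.update t i a')) with hw' | hw'
      · rw [FPA_winner hn0 _ i hw', Function.update_self] at h2
        exact hane (congrArg Prod.snd h2)
      · rw [FPA_loser hn0 _ i hw'] at h2
        simp at h2
    · exact FPA_loser hn0 _ i hw
  by_cases hi : i.val + 1 < n
  · -- there is a bidder j with index greater than i
    set j : Fin n := ⟨i.val + 1, hi⟩ with hj
    have hij : i ≠ j := by simp [hj, Fin.ext_iff]
    set t' : Fin n → ℝ := Function.update (fun _ => a) j a' with ht'
    have hvj : Function.update t' i a j = a' := by
      rw [Function.update_of_ne (Ne.symm hij), ht', Function.update_self]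
    have hvk : ∀ k, k ≠ j → Function.update t' i a k = a := by
      intro k hk
      rcases eq_or_ne k i with rfl | hki
      · rw [Function.update_self]
      · rw [Function.update_of_ne hki, ht', Function.update_of_ne hk]
    have hlwv : lowWinner hn0 (Function.update t' i a) = j := by
      apply lowWinner_eq_of_unique
      intro k hk
      rw [hvk k hk, hvj]; exact hlt
    -- values at (a', t')
    have hv'i : Function.update t' i a' i = a' := Function.update_self ..
    have hv'k : ∀ k, k ≠ i → k ≠ j → Function.update t' i a' k = a := by
      intro k h1 h2
      rw [Function.update_of_ne h1, ht', Function.update_of_ne h2]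
    have hmax : ∀ k, Function.update t' i a' k ≤ Function.update t' i a' i := by
      intro k
      rcases eq_or_ne k i with rfl | h1
      · exact le_refl _
      rcases eq_or_ne k j with rfl | h2
      · rw [Function.update_of_ne (Ne.symm hij), ht', Function.update_self, hv'i]
      · rw [hv'k k h1 h2, hv'i]; exact hlt.le
    have hlwv' : lowWinner hn0 (Function.update t' i a') = i := by
      have hle := lowWinner_le hn0 (Function.update t' i a') i hmax
      by_contra h
      have hlwlt : (lowWinner hn0 (Function.update t' i a')) < i :=
        lt_of_le_of_ne hle h
      have hiltj : i < j := by simp [hj, Fin.lt_def]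
      have hlwnej : lowWinner hn0 (Function.update t' i a') ≠ j :=
        ne_of_lt (hlwlt.trans hiltj)
      have h2 : Function.update t' i a' (lowWinner hn0 (Function.update t' i a')) = a :=
        hv'k _ h hlwnej
      have h3 := lowWinner_isMax hn0 (Function.update t' i a') i
      rw [h2, hv'i] at h3
      linarith
    refine ⟨t', ?_, key, ?_, ?_⟩
    · intro k
      rcases eq_or_ne k j with rfl | hk
      · rw [ht', Function.update_self]; exact ha'
      · rw [ht', Function.update_of_ne hk]; exact ha
    · exact FPA_loser hn0 _ i (by rw [hlwv]; exact hij)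
    · intro hcontra
      have h1 := congrFun hcontra i
      have h2 : FPA hn0 (Function.update t' i a) i = (false, 0) :=
        FPA_loser hn0 _ i (by rw [hlwv]; exact hij)
      have h3 : FPA hn0 (Function.update t' i a') i = (true, a') := by
        rw [FPA_winner hn0 _ i hlwv'.symm, hv'i]
      rw [h2, h3] at h1
      simp at h1
  · -- i is the last bidder; use the all-`a` column
    have hipos : 0 < i.val := by omega
    set t' : Fin n → ℝ := fun _ => a with ht'
    have hlwv : i ≠ lowWinner hn0 (Function.update t' i a) := by
      have hall : ∀ k, Function.update t' i a k = a := by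
        intro k
        rcases eq_or_ne k i with rfl | hk
        · rw [Function.update_self]
        · rw [Function.update_of_ne hk]
      have hle := lowWinner_le hn0 (Function.update t' i a) ⟨0, hn0⟩
        (by intro k; rw [hall, hall])
      intro h
      rw [← h] at hle
      have h2 : i.val ≤ 0 := Fin.le_def.mp hle
      omega
    have hlwv' : lowWinner hn0 (Function.update t' i a') = i := by
      apply lowWinner_eq_of_unique
      intro k hk
      rw [Function.update_of_ne hk, Function.update_self]
      exact hlt
    refine ⟨t', fun k => ha, key, FPA_loser hn0 _ i hlwv, ?_⟩
    intro hcontra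
    have h1 := congrFun hcontra i
    have h2 : FPA hn0 (Function.update t' i a) i = (false, 0) := FPA_loser hn0 _ i hlwv
    have h3 : FPA hn0 (Function.update t' i a') i = (true, a') := by
      rw [FPA_winner hn0 _ i hlwv'.symm, Function.update_self]
    rw [h2, h3] at h1
    simp at h1

end PrivacyPaper
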